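/- Let A ∈ ℝ^{n×d} with n ≤ d satisfy AAᵀ = I_n, let y ∈ ℝⁿ and β > 0, and write p := ‖(y)_+‖₂ and q := ‖(−y)_+‖₂. Define (U*, w*) as follows: if β ≤ p and β ≤ q, take the two-neuron network U* = [Aᵀ(y)_+/p, Aᵀ(−y)_+/q] with w* = (p − β, −q + β); if β > p and β ≤ q, take the single neuron U* = Aᵀ(−y)_+/q with w* = −q + β; if β ≤ p and β > q, take U* = Aᵀ(y)_+/p with w* = p − β; if β > p and β > q, take the empty (zero) network. Then (U*, w*) attains the infimum, over all widths m and all parameters (U, w) with ‖u_j‖₂ ≤ 1 for every j, of the regularized objective (1/2)‖(AU)_+ w − y‖₂² + β‖w‖₁. -/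
import Mathlib


open Finset Matrix

/-- Euclidean (ℓ2) norm of a finite-dimensional real vector. -/
noncomputable def l2norm {k : ℕ} (x : Fin k → ℝ) : ℝ := Real.sqrt (∑ i, x i ^ 2)

/-- Entrywise ReLU of a vector. -/
def reluV {k : ℕ} (x : Fin k → ℝ) : Fin k → ℝ := fun i => max (x i) 0

/-- Output `(AU)_+ w = ∑_j w_j (A u_j)_+` of a bias-free two-layer ReLU network. -/
noncomputable def bfOut {n d m : ℕ} (A : Matrix (Fin n) (Fin d) ℝ)
    (U : Fin m → Fin d → ℝ) (w : Fin m → ℝ) : Fin n → ℝ :=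
  ∑ j, w j • fun i => max (A.mulVec (U j) i) 0

/-- The ℓ1-regularized objective `(1/2)‖(AU)₊w - y‖₂² + β‖w‖₁`. -/
noncomputable def regObj {n d m : ℕ} (A : Matrix (Fin n) (Fin d) ℝ) (y : Fin n → ℝ)
    (β : ℝ) (U : Fin m → Fin d → ℝ) (w : Fin m → ℝ) : ℝ :=
  (1/2) * (∑ i, (bfOut A U w i - y i) ^ 2) + β * ∑ j, |w j|

lemma l2norm_nonneg {k : ℕ} (x : Fin k → ℝ) : 0 ≤ l2norm x := Real.sqrt_nonneg _

lemma sq_l2norm {k : ℕ} (x : Fin k → ℝ) : l2norm x ^ 2 = ∑ i, x i ^ 2 :=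
  Real.sq_sqrt (Finset.sum_nonneg fun _ _ => sq_nonneg _)

lemma l2norm_le_of_sq {k : ℕ} {x : Fin k → ℝ} {c : ℝ} (hc : 0 ≤ c)
    (h : ∑ i, x i ^ 2 ≤ c ^ 2) : l2norm x ≤ c := by
  rw [l2norm, show c = Real.sqrt (c ^ 2) from (Real.sqrt_sq hc).symm]
  exact Real.sqrt_le_sqrt h

lemma sq_le_of_l2norm_le {k : ℕ} {x : Fin k → ℝ} {c : ℝ} (h : l2norm x ≤ c) :
    ∑ i, x i ^ 2 ≤ c ^ 2 := by
  rw [← sq_l2norm]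
  exact pow_le_pow_left₀ (l2norm_nonneg x) h 2

lemma dot_eq_sumsq {k : ℕ} (v : Fin k → ℝ) : v ⬝ᵥ v = ∑ i, v i ^ 2 := by
  simp [dotProduct, sq]

/-- Isometry: `AAᵀ = 1` implies `Aᵀ` preserves sums of squares. -/
lemma iso_sumsq {n d : ℕ} {A : Matrix (Fin n) (Fin d) ℝ} (hA : A * Aᵀ = 1)
    (x : Fin n → ℝ) : ∑ k, (Aᵀ.mulVec x) k ^ 2 = ∑ i, x i ^ 2 := by
  rw [← dot_eq_sumsq, ← dot_eq_sumsq]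
  calc Aᵀ *ᵥ x ⬝ᵥ Aᵀ *ᵥ x = (x ᵥ* A) ⬝ᵥ (Aᵀ *ᵥ x) := by rw [mulVec_transpose]
    _ = ((x ᵥ* A) ᵥ* Aᵀ) ⬝ᵥ x := by rw [dotProduct_mulVec]
    _ = (x ᵥ* (A * Aᵀ)) ⬝ᵥ x := by rw [vecMul_vecMul]
    _ = x ⬝ᵥ x := by rw [hA, vecMul_one]

lemma AAt_mulVec {n d : ℕ} {A : Matrix (Fin n) (Fin d) ℝ} (hA : A * Aᵀ = 1)
    (x : Fin n → ℝ) : A.mulVec (Aᵀ.mulVec x) = x := by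
  rw [mulVec_mulVec, hA, one_mulVec]

/-- Contraction: `AAᵀ = 1` implies `A` does not increase sums of squares. -/
lemma contract_sumsq {n d : ℕ} {A : Matrix (Fin n) (Fin d) ℝ} (hA : A * Aᵀ = 1)
    (u : Fin d → ℝ) : ∑ i, (A.mulVec u) i ^ 2 ≤ ∑ k, u k ^ 2 := by
  set v := A.mulVec u with hv
  have h1 : ∑ k, (Aᵀ *ᵥ v) k * u k = ∑ i, v i ^ 2 := by
    rw [← dot_eq_sumsq]
    show (Aᵀ *ᵥ v) ⬝ᵥ u = v ⬝ᵥ v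
    rw [hv, mulVec_transpose, ← dotProduct_mulVec]
  have hcs := sum_mul_sq_le_sq_mul_sq Finset.univ (Aᵀ *ᵥ v) u
  rw [iso_sumsq hA v, h1] at hcs
  have hS : (0:ℝ) ≤ ∑ i, v i ^ 2 := Finset.sum_nonneg fun _ _ => sq_nonneg _
  nlinarith [hcs, hS, Finset.sum_nonneg (fun i (_ : i ∈ Finset.univ) => sq_nonneg (u i))]

lemma reluV_nonneg {k : ℕ} (x : Fin k → ℝ) (i : Fin k) : 0 ≤ reluV x i := le_max_right _ _

lemma relu_decomp {k : ℕ} (y : Fin k → ℝ) (i : Fin k) : y i = reluV y i - reluV (-y) i := by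
  simp only [reluV, Pi.neg_apply]
  rcases le_total 0 (y i) with h | h
  · rw [max_eq_left h, max_eq_right (by linarith)]; ring
  · rw [max_eq_right h, max_eq_left (by linarith)]; ring

lemma relu_disj {k : ℕ} (y : Fin k → ℝ) (i : Fin k) : reluV y i * reluV (-y) i = 0 := by
  simp only [reluV, Pi.neg_apply]
  rcases le_total 0 (y i) with h | h
  · rw [max_eq_right (by linarith : -y i ≤ 0)]; ring
  · rw [max_eq_right h]; ring

/-- Sum of squares of a linear combination of the two disjointly-supported relu parts. -/
lemma sumsq_comb {k : ℕ} (y : Fin k → ℝ) (a b : ℝ) :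
    ∑ i, (a * reluV y i + b * reluV (-y) i) ^ 2
      = a ^ 2 * ∑ i, reluV y i ^ 2 + b ^ 2 * ∑ i, reluV (-y) i ^ 2 := by
  rw [Finset.mul_sum, Finset.mul_sum, ← Finset.sum_add_distrib]
  refine Finset.sum_congr rfl fun i _ => ?_
  linear_combination (2 * a * b) * relu_disj y i

/-- The per-part optimal value function. -/
noncomputable def Fval (β s : ℝ) : ℝ := if β ≤ s then β * s - β ^ 2 / 2 else s ^ 2 / 2

lemma Fval_eq {β s : ℝ} (hβ : 0 < β) (hs : 0 ≤ s) :
    Fval β s = (min β s / s) * s ^ 2 - (min β s / s) ^ 2 * s ^ 2 / 2 := by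
  unfold Fval
  by_cases h : β ≤ s
  · rw [if_pos h, min_eq_left h]
    have hsne : s ≠ 0 := ne_of_gt (lt_of_lt_of_le hβ h)
    field_simp
  · rw [if_neg h]
    rcases eq_or_lt_of_le hs with h0 | h0
    · simp [← h0]
    · rw [min_eq_right (le_of_lt (lt_of_not_ge h)), div_self (ne_of_gt h0)]
      ring

lemma cmul_le {β s : ℝ} (hβ : 0 < β) (hs : 0 ≤ s) : (min β s / s) * s ≤ β := by
  rcases eq_or_lt_of_le hs with h0 | h0
  · rw [← h0]; simpa using hβ.le
  · rw [div_mul_cancel₀ _ (ne_of_gt h0)]; exact min_le_left _ _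

lemma cmul_nonneg {β s : ℝ} (hβ : 0 < β) (hs : 0 ≤ s) : 0 ≤ min β s / s :=
  div_nonneg (le_min hβ.le hs) hs

set_option maxHeartbeats 1000000 in
lemma lower_bound {n d : ℕ} {A : Matrix (Fin n) (Fin d) ℝ} (hA : A * Aᵀ = 1)
    (y : Fin n → ℝ) {β : ℝ} (hβ : 0 < β) {m : ℕ} (U : Fin m → Fin d → ℝ)
    (w : Fin m → ℝ) (hU : ∀ j, l2norm (U j) ≤ 1) :
    Fval β (l2norm (reluV y)) + Fval β (l2norm (reluV (-y))) ≤ regObj A y β U w := by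
  set yp := reluV y with hyp
  set ym := reluV (-y) with hym
  set p := l2norm yp with hpdef
  set q := l2norm ym with hqdef
  have hp0 : 0 ≤ p := l2norm_nonneg _
  have hq0 : 0 ≤ q := l2norm_nonneg _
  have hP2 : ∑ i, yp i ^ 2 = p ^ 2 := (sq_l2norm yp).symm
  have hQ2 : ∑ i, ym i ^ 2 = q ^ 2 := (sq_l2norm ym).symm
  set cp := min β p / p with hcp
  set cq := min β q / q with hcq
  have hcp0 : 0 ≤ cp := cmul_nonneg hβ hp0
  have hcq0 : 0 ≤ cq := cmul_nonneg hβ hq0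
  have hcpp : cp * p ≤ β := cmul_le hβ hp0
  have hcqq : cq * q ≤ β := cmul_le hβ hq0
  set lam : Fin n → ℝ := fun i => β⁻¹ * (cp * yp i - cq * ym i) with hlam
  -- values of the dual certificate
  have hlamy : ∑ i, lam i * y i = β⁻¹ * (cp * p ^ 2 + cq * q ^ 2) := by
    have step : ∀ i, lam i * y i = β⁻¹ * (cp * yp i ^ 2 + cq * ym i ^ 2) := by
      intro i
      have hdec : y i = yp i - ym i := relu_decomp y i
      have hdisj : yp i * ym i = 0 := relu_disj y i
      simp only [hlam]
      linear_combination (β⁻¹ * (cp * yp i - cq * ym i)) * hdec - β⁻¹ * (cp + cq) * hdisj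
    calc ∑ i, lam i * y i = ∑ i, β⁻¹ * (cp * yp i ^ 2 + cq * ym i ^ 2) :=
          Finset.sum_congr rfl fun i _ => step i
      _ = β⁻¹ * (cp * ∑ i, yp i ^ 2 + cq * ∑ i, ym i ^ 2) := by
          rw [← Finset.mul_sum, Finset.sum_add_distrib, ← Finset.mul_sum, ← Finset.mul_sum]
      _ = _ := by rw [hP2, hQ2]
  have hlam2 : ∑ i, lam i ^ 2 = β⁻¹ ^ 2 * (cp ^ 2 * p ^ 2 + cq ^ 2 * q ^ 2) := by
    have hc := sumsq_comb y (β⁻¹ * cp) (-(β⁻¹ * cq))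
    rw [← hyp, ← hym] at hc
    calc ∑ i, lam i ^ 2 = ∑ i, ((β⁻¹ * cp) * yp i + (-(β⁻¹ * cq)) * ym i) ^ 2 :=
          Finset.sum_congr rfl fun i _ => by simp only [hlam]; ring
      _ = (β⁻¹ * cp) ^ 2 * ∑ i, yp i ^ 2 + (-(β⁻¹ * cq)) ^ 2 * ∑ i, ym i ^ 2 := hc
      _ = _ := by rw [hP2, hQ2]; ring
  -- Step A : dual bound on ℓ1 norm
  have hbf : ∀ i, bfOut A U w i = ∑ j, w j * max (A.mulVec (U j) i) 0 := by
    intro i; simp [bfOut, Finset.sum_apply]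
  have stepA : ∑ i, lam i * bfOut A U w i ≤ ∑ j, |w j| := by
    have swap : ∑ i, lam i * bfOut A U w i
        = ∑ j, w j * ∑ i, lam i * max (A.mulVec (U j) i) 0 := by
      calc ∑ i, lam i * bfOut A U w i
          = ∑ i, ∑ j, lam i * (w j * max (A.mulVec (U j) i) 0) := by
            refine Finset.sum_congr rfl fun i _ => ?_
            rw [hbf i, Finset.mul_sum]
        _ = ∑ j, ∑ i, lam i * (w j * max (A.mulVec (U j) i) 0) := Finset.sum_comm
        _ = ∑ j, w j * ∑ i, lam i * max (A.mulVec (U j) i) 0 := by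
            refine Finset.sum_congr rfl fun j _ => ?_
            rw [Finset.mul_sum]
            exact Finset.sum_congr rfl fun i _ => by ring
    rw [swap]
    refine Finset.sum_le_sum fun j _ => ?_
    set h : Fin n → ℝ := fun i => max (A.mulVec (U j) i) 0 with hh
    have hhnn : ∀ i, 0 ≤ h i := fun i => le_max_right _ _
    have hh2 : ∑ i, h i ^ 2 ≤ 1 := by
      have c1 : ∑ i, h i ^ 2 ≤ ∑ i, (A.mulVec (U j)) i ^ 2 := by
        refine Finset.sum_le_sum fun i _ => ?_
        simp only [hh]
        rcases le_total (A.mulVec (U j) i) 0 with hz | hz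
        · rw [max_eq_right hz]; simpa using sq_nonneg (A.mulVec (U j) i)
        · rw [max_eq_left hz]
      have c2 := contract_sumsq hA (U j)
      have c3 : ∑ k, U j k ^ 2 ≤ 1 := by simpa using sq_le_of_l2norm_le (hU j)
      linarith
    set a := ∑ i, yp i * h i with hadef
    set b := ∑ i, ym i * h i with hbdef
    have ha0 : 0 ≤ a := Finset.sum_nonneg fun i _ => mul_nonneg (reluV_nonneg y i) (hhnn i)
    have hb0 : 0 ≤ b := Finset.sum_nonneg fun i _ => mul_nonneg (reluV_nonneg (-y) i) (hhnn i)
    have hap : a ≤ p := by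
      have hcs := sum_mul_sq_le_sq_mul_sq Finset.univ yp h
      rw [hP2] at hcs
      nlinarith [sq_nonneg p, mul_nonneg (sq_nonneg p) (Finset.sum_nonneg fun i (_ : i ∈ Finset.univ) => sq_nonneg (h i))]
    have hbq : b ≤ q := by
      have hcs := sum_mul_sq_le_sq_mul_sq Finset.univ ym h
      rw [hQ2] at hcs
      nlinarith [sq_nonneg q, mul_nonneg (sq_nonneg q) (Finset.sum_nonneg fun i (_ : i ∈ Finset.univ) => sq_nonneg (h i))]
    have hD : ∑ i, lam i * h i = (cp * a - cq * b) / β := by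
      calc ∑ i, lam i * h i = ∑ i, (β⁻¹ * cp * (yp i * h i) - β⁻¹ * cq * (ym i * h i)) :=
            Finset.sum_congr rfl fun i _ => by simp only [hlam]; ring
        _ = β⁻¹ * cp * a - β⁻¹ * cq * b := by
            rw [Finset.sum_sub_distrib, ← Finset.mul_sum, ← Finset.mul_sum, hadef, hbdef]
        _ = (cp * a - cq * b) / β := by rw [div_eq_inv_mul]; ring
    have hub : cp * a - cq * b ≤ β := by
      linarith [mul_nonneg hcq0 hb0, mul_le_mul_of_nonneg_left hap hcp0]
    have hlb : -β ≤ cp * a - cq * b := by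
      linarith [mul_nonneg hcp0 ha0, mul_le_mul_of_nonneg_left hbq hcq0]
    have hD1 : ∑ i, lam i * h i ≤ 1 := by
      rw [hD]; exact (div_le_one hβ).mpr hub
    have hD2 : -1 ≤ ∑ i, lam i * h i := by
      rw [hD]
      rw [le_div_iff₀ hβ]
      linarith
    rcases le_total 0 (w j) with hw | hw
    · rw [abs_of_nonneg hw]
      nlinarith
    · rw [abs_of_nonpos hw]
      nlinarith
  -- Step B : completing the square
  have hkey : (1/2) * ∑ i, (bfOut A U w i - y i) ^ 2 + β * ∑ i, lam i * bfOut A U w i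
      = (β * ∑ i, lam i * y i - β ^ 2 / 2 * ∑ i, lam i ^ 2)
        + ∑ i, (1/2) * (bfOut A U w i - y i + β * lam i) ^ 2 := by
    rw [Finset.mul_sum, Finset.mul_sum, Finset.mul_sum, Finset.mul_sum,
      ← Finset.sum_add_distrib, ← Finset.sum_sub_distrib, ← Finset.sum_add_distrib]
    exact Finset.sum_congr rfl fun i _ => by ring
  have hsqnn : 0 ≤ ∑ i, (1/2) * (bfOut A U w i - y i + β * lam i) ^ 2 :=
    Finset.sum_nonneg fun i _ => by positivity
  -- the value of the lower bound
  have hL : Fval β p + Fval β q = β * ∑ i, lam i * y i - β ^ 2 / 2 * ∑ i, lam i ^ 2 := by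
    rw [hlamy, hlam2, Fval_eq hβ hp0, Fval_eq hβ hq0, ← hcp, ← hcq]
    have hβne : β ≠ 0 := ne_of_gt hβ
    field_simp
    ring
  have hobj : regObj A y β U w
      ≥ (1/2) * ∑ i, (bfOut A U w i - y i) ^ 2 + β * ∑ i, lam i * bfOut A U w i := by
    unfold regObj
    have := mul_le_mul_of_nonneg_left stepA hβ.le
    linarith
  rw [hL]
  linarith [hkey, hsqnn, hobj]

lemma bfOut_apply {n d m : ℕ} (A : Matrix (Fin n) (Fin d) ℝ) (U : Fin m → Fin d → ℝ)
    (w : Fin m → ℝ) (i : Fin n) :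
    bfOut A U w i = ∑ j, w j * max (A.mulVec (U j) i) 0 := by
  simp [bfOut, Finset.sum_apply]

lemma opt_iff {n d : ℕ} {A : Matrix (Fin n) (Fin d) ℝ} (hA : A * Aᵀ = 1)
    (y : Fin n → ℝ) {β : ℝ} (hβ : 0 < β) {m : ℕ} (U : Fin m → Fin d → ℝ) (w : Fin m → ℝ)
    (hfeas : ∀ j, l2norm (U j) ≤ 1)
    (hval : regObj A y β U w = Fval β (l2norm (reluV y)) + Fval β (l2norm (reluV (-y)))) :
    regObj A y β U w = sInf {r : ℝ | ∃ (m : ℕ) (U : Fin m → Fin d → ℝ) (w : Fin m → ℝ),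
        (∀ j, l2norm (U j) ≤ 1) ∧ r = regObj A y β U w} := by
  have hmem : regObj A y β U w ∈ {r : ℝ | ∃ (m : ℕ) (U : Fin m → Fin d → ℝ) (w : Fin m → ℝ),
      (∀ j, l2norm (U j) ≤ 1) ∧ r = regObj A y β U w} := ⟨m, U, w, hfeas, rfl⟩
  have hlb : ∀ r ∈ {r : ℝ | ∃ (m : ℕ) (U : Fin m → Fin d → ℝ) (w : Fin m → ℝ),
      (∀ j, l2norm (U j) ≤ 1) ∧ r = regObj A y β U w},
      Fval β (l2norm (reluV y)) + Fval β (l2norm (reluV (-y))) ≤ r := by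
    rintro r ⟨m', U', w', hf', rfl⟩
    exact lower_bound hA y hβ U' w' hf'
  refine le_antisymm ?_ (csInf_le ⟨_, fun r hr => hlb r hr⟩ hmem)
  refine le_csInf ⟨_, hmem⟩ fun b hb => ?_
  rw [hval]
  exact hlb b hb

lemma feas_unit {n d : ℕ} {A : Matrix (Fin n) (Fin d) ℝ} (hA : A * Aᵀ = 1)
    (x : Fin n → ℝ) (hx : 0 < l2norm x) : l2norm ((l2norm x)⁻¹ • Aᵀ.mulVec x) ≤ 1 := by
  apply l2norm_le_of_sq zero_le_one
  have hne : l2norm x ≠ 0 := ne_of_gt hx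
  have e : ∀ k, ((l2norm x)⁻¹ • Aᵀ.mulVec x) k ^ 2
      = (l2norm x)⁻¹ ^ 2 * (Aᵀ.mulVec x) k ^ 2 := fun k => by
    simp only [Pi.smul_apply, smul_eq_mul]; ring
  rw [Finset.sum_congr rfl fun k _ => e k, ← Finset.mul_sum, iso_sumsq hA, ← sq_l2norm,
    ← mul_pow, inv_mul_cancel₀ hne]

lemma relu_out {n d : ℕ} {A : Matrix (Fin n) (Fin d) ℝ} (hA : A * Aᵀ = 1)
    (x : Fin n → ℝ) (hx : ∀ i, 0 ≤ x i) {c : ℝ} (hc : 0 ≤ c) (i : Fin n) :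
    max (A.mulVec (c • Aᵀ.mulVec x) i) 0 = c * x i := by
  rw [mulVec_smul, AAt_mulVec hA]
  simp only [Pi.smul_apply, smul_eq_mul]
  exact max_eq_left (mul_nonneg hc (hx i))

lemma sumsq_relu {k : ℕ} (y : Fin k → ℝ) : ∑ i, reluV y i ^ 2 = l2norm (reluV y) ^ 2 :=
  (sq_l2norm _).symm

lemma val1 {n d : ℕ} {A : Matrix (Fin n) (Fin d) ℝ} (hA : A * Aᵀ = 1)
    (y : Fin n → ℝ) {β p q : ℝ} (hβ : 0 < β)
    (hp : p = l2norm (reluV y)) (hq : q = l2norm (reluV (-y)))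
    (h1 : β ≤ p) (h2 : β ≤ q) :
    regObj A y β ![p⁻¹ • Aᵀ.mulVec (reluV y), q⁻¹ • Aᵀ.mulVec (reluV (-y))] ![p - β, -q + β]
      = Fval β p + Fval β q := by
  have hp0 : 0 < p := lt_of_lt_of_le hβ h1
  have hq0 : 0 < q := lt_of_lt_of_le hβ h2
  have hpne : p ≠ 0 := ne_of_gt hp0
  have hqne : q ≠ 0 := ne_of_gt hq0
  have hout : ∀ i, bfOut A ![p⁻¹ • Aᵀ.mulVec (reluV y), q⁻¹ • Aᵀ.mulVec (reluV (-y))]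
      ![p - β, -q + β] i = (p - β) * (p⁻¹ * reluV y i) + (-q + β) * (q⁻¹ * reluV (-y) i) := by
    intro i
    rw [bfOut_apply, Fin.sum_univ_two]
    simp only [Matrix.cons_val_zero, Matrix.cons_val_one, Matrix.head_cons]
    rw [relu_out hA (reluV y) (reluV_nonneg y) (inv_nonneg.mpr hp0.le) i,
      relu_out hA (reluV (-y)) (reluV_nonneg (-y)) (inv_nonneg.mpr hq0.le) i]
  have e1 : ∀ i, bfOut A ![p⁻¹ • Aᵀ.mulVec (reluV y), q⁻¹ • Aᵀ.mulVec (reluV (-y))]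
      ![p - β, -q + β] i - y i = (-(β * p⁻¹)) * reluV y i + (β * q⁻¹) * reluV (-y) i := by
    intro i
    rw [hout i, relu_decomp y i]
    field_simp
    ring
  have hsum : ∑ i, (bfOut A ![p⁻¹ • Aᵀ.mulVec (reluV y), q⁻¹ • Aᵀ.mulVec (reluV (-y))]
      ![p - β, -q + β] i - y i) ^ 2 = 2 * β ^ 2 := by
    rw [Finset.sum_congr rfl fun i _ => congrArg (· ^ 2) (e1 i), sumsq_comb,
      sumsq_relu, sumsq_relu, ← hp, ← hq]
    field_simp
    ring
  unfold regObj
  rw [hsum, Fin.sum_univ_two]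
  simp only [Matrix.cons_val_zero, Matrix.cons_val_one, Matrix.head_cons]
  rw [abs_of_nonneg (by linarith : (0:ℝ) ≤ p - β), abs_of_nonpos (by linarith : -q + β ≤ 0)]
  unfold Fval
  rw [if_pos h1, if_pos h2]
  ring

lemma val2 {n d : ℕ} {A : Matrix (Fin n) (Fin d) ℝ} (hA : A * Aᵀ = 1)
    (y : Fin n → ℝ) {β p q : ℝ} (hβ : 0 < β)
    (hp : p = l2norm (reluV y)) (hq : q = l2norm (reluV (-y)))
    (h1 : p < β) (h2 : β ≤ q) :
    regObj A y β ![q⁻¹ • Aᵀ.mulVec (reluV (-y))] ![-q + β] = Fval β p + Fval β q := by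
  have hq0 : 0 < q := lt_of_lt_of_le hβ h2
  have hqne : q ≠ 0 := ne_of_gt hq0
  have hout : ∀ i, bfOut A ![q⁻¹ • Aᵀ.mulVec (reluV (-y))] ![-q + β] i
      = (-q + β) * (q⁻¹ * reluV (-y) i) := by
    intro i
    rw [bfOut_apply, Fin.sum_univ_one]
    simp only [Matrix.cons_val_zero]
    rw [relu_out hA (reluV (-y)) (reluV_nonneg (-y)) (inv_nonneg.mpr hq0.le) i]
  have e1 : ∀ i, bfOut A ![q⁻¹ • Aᵀ.mulVec (reluV (-y))] ![-q + β] i - y i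
      = (-1) * reluV y i + (β * q⁻¹) * reluV (-y) i := by
    intro i
    rw [hout i, relu_decomp y i]
    field_simp
    ring
  have hsum : ∑ i, (bfOut A ![q⁻¹ • Aᵀ.mulVec (reluV (-y))] ![-q + β] i - y i) ^ 2
      = p ^ 2 + β ^ 2 := by
    rw [Finset.sum_congr rfl fun i _ => congrArg (· ^ 2) (e1 i), sumsq_comb,
      sumsq_relu, sumsq_relu, ← hp, ← hq]
    field_simp
  unfold regObj
  rw [hsum, Fin.sum_univ_one]
  simp only [Matrix.cons_val_zero]
  rw [abs_of_nonpos (by linarith : -q + β ≤ 0)]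
  unfold Fval
  rw [if_neg (not_le.mpr h1), if_pos h2]
  ring

lemma val3 {n d : ℕ} {A : Matrix (Fin n) (Fin d) ℝ} (hA : A * Aᵀ = 1)
    (y : Fin n → ℝ) {β p q : ℝ} (hβ : 0 < β)
    (hp : p = l2norm (reluV y)) (hq : q = l2norm (reluV (-y)))
    (h1 : β ≤ p) (h2 : q < β) :
    regObj A y β ![p⁻¹ • Aᵀ.mulVec (reluV y)] ![p - β] = Fval β p + Fval β q := by
  have hp0 : 0 < p := lt_of_lt_of_le hβ h1
  have hpne : p ≠ 0 := ne_of_gt hp0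
  have hout : ∀ i, bfOut A ![p⁻¹ • Aᵀ.mulVec (reluV y)] ![p - β] i
      = (p - β) * (p⁻¹ * reluV y i) := by
    intro i
    rw [bfOut_apply, Fin.sum_univ_one]
    simp only [Matrix.cons_val_zero]
    rw [relu_out hA (reluV y) (reluV_nonneg y) (inv_nonneg.mpr hp0.le) i]
  have e1 : ∀ i, bfOut A ![p⁻¹ • Aᵀ.mulVec (reluV y)] ![p - β] i - y i
      = (-(β * p⁻¹)) * reluV y i + 1 * reluV (-y) i := by
    intro i
    rw [hout i, relu_decomp y i]
    field_simp
    ring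
  have hsum : ∑ i, (bfOut A ![p⁻¹ • Aᵀ.mulVec (reluV y)] ![p - β] i - y i) ^ 2
      = β ^ 2 + q ^ 2 := by
    rw [Finset.sum_congr rfl fun i _ => congrArg (· ^ 2) (e1 i), sumsq_comb,
      sumsq_relu, sumsq_relu, ← hp, ← hq]
    field_simp
  unfold regObj
  rw [hsum, Fin.sum_univ_one]
  simp only [Matrix.cons_val_zero]
  rw [abs_of_nonneg (by linarith : (0:ℝ) ≤ p - β)]
  unfold Fval
  rw [if_pos h1, if_neg (not_le.mpr h2)]
  ring

lemma val4 {n d : ℕ} (A : Matrix (Fin n) (Fin d) ℝ)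
    (y : Fin n → ℝ) {β p q : ℝ} (hβ : 0 < β)
    (hp : p = l2norm (reluV y)) (hq : q = l2norm (reluV (-y)))
    (h1 : p < β) (h2 : q < β) :
    regObj A y β (![] : Fin 0 → Fin d → ℝ) (![] : Fin 0 → ℝ) = Fval β p + Fval β q := by
  have e1 : ∀ i, bfOut A (![] : Fin 0 → Fin d → ℝ) (![] : Fin 0 → ℝ) i - y i
      = (-1) * reluV y i + 1 * reluV (-y) i := by
    intro i
    rw [bfOut_apply, relu_decomp y i]
    simp
    ring
  have hsum : ∑ i, (bfOut A (![] : Fin 0 → Fin d → ℝ) (![] : Fin 0 → ℝ) i - y i) ^ 2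
      = p ^ 2 + q ^ 2 := by
    rw [Finset.sum_congr rfl fun i _ => congrArg (· ^ 2) (e1 i), sumsq_comb,
      sumsq_relu, sumsq_relu, ← hp, ← hq]
    ring
  unfold regObj
  rw [hsum]
  simp only [Finset.univ_eq_empty, Finset.sum_empty, mul_zero, add_zero]
  unfold Fval
  rw [if_neg (not_le.mpr h1), if_neg (not_le.mpr h2)]
  ring

/-- Closed-form optimal solutions of the regularized training problem for whitened data
(`AAᵀ = I`, `n ≤ d`), with `p = ‖(y)₊‖₂`, `q = ‖(-y)₊‖₂`: depending on the size of `β`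
relative to `p` and `q`, a two-neuron, one-neuron, or empty network built from
`Aᵀ(y)₊/p` and `Aᵀ(-y)₊/q` with soft-thresholded output weights is feasible and attains
the infimum of `(1/2)‖(AU)₊w - y‖₂² + β‖w‖₁` over all widths and `‖u_j‖₂ ≤ 1`. -/
theorem stmt18 {n d : ℕ} (hnd : n ≤ d) (A : Matrix (Fin n) (Fin d) ℝ)
    (hA : A * Aᵀ = 1) (y : Fin n → ℝ) (β : ℝ) (hβ : 0 < β) :
    let p := l2norm (reluV y)
    let q := l2norm (reluV (-y))
    let P := sInf {r : ℝ | ∃ (m : ℕ) (U : Fin m → Fin d → ℝ) (w : Fin m → ℝ),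
        (∀ j, l2norm (U j) ≤ 1) ∧ r = regObj A y β U w}
    (β ≤ p → β ≤ q →
      (∀ j, l2norm (![p⁻¹ • Aᵀ.mulVec (reluV y), q⁻¹ • Aᵀ.mulVec (reluV (-y))] j) ≤ 1) ∧
      regObj A y β ![p⁻¹ • Aᵀ.mulVec (reluV y), q⁻¹ • Aᵀ.mulVec (reluV (-y))]
        ![p - β, -q + β] = P) ∧
    (p < β → β ≤ q →
      (∀ j, l2norm (![q⁻¹ • Aᵀ.mulVec (reluV (-y))] j) ≤ 1) ∧
      regObj A y β ![q⁻¹ • Aᵀ.mulVec (reluV (-y))] ![-q + β] = P) ∧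
    (β ≤ p → q < β →
      (∀ j, l2norm (![p⁻¹ • Aᵀ.mulVec (reluV y)] j) ≤ 1) ∧
      regObj A y β ![p⁻¹ • Aᵀ.mulVec (reluV y)] ![p - β] = P) ∧
    (p < β → q < β →
      regObj A y β (![] : Fin 0 → Fin d → ℝ) (![] : Fin 0 → ℝ) = P) := by
  intro p q P
  have hp : p = l2norm (reluV y) := rfl
  have hq : q = l2norm (reluV (-y)) := rfl
  have hP : P = sInf {r : ℝ | ∃ (m : ℕ) (U : Fin m → Fin d → ℝ) (w : Fin m → ℝ),
      (∀ j, l2norm (U j) ≤ 1) ∧ r = regObj A y β U w} := rfl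
  refine ⟨fun h1 h2 => ?_, fun h1 h2 => ?_, fun h1 h2 => ?_, fun h1 h2 => ?_⟩
  · have hp0 : 0 < p := lt_of_lt_of_le hβ h1
    have hq0 : 0 < q := lt_of_lt_of_le hβ h2
    have hfeas : ∀ j, l2norm
        (![p⁻¹ • Aᵀ.mulVec (reluV y), q⁻¹ • Aᵀ.mulVec (reluV (-y))] j) ≤ 1 := by
      intro j
      fin_cases j
      · show l2norm (p⁻¹ • Aᵀ.mulVec (reluV y)) ≤ 1
        rw [hp]
        exact feas_unit hA (reluV y) (by rw [← hp]; exact hp0)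
      · show l2norm (q⁻¹ • Aᵀ.mulVec (reluV (-y))) ≤ 1
        rw [hq]
        exact feas_unit hA (reluV (-y)) (by rw [← hq]; exact hq0)
    refine ⟨hfeas, ?_⟩
    rw [hP]
    exact opt_iff hA y hβ _ _ hfeas (val1 hA y hβ hp hq h1 h2)
  · have hq0 : 0 < q := lt_of_lt_of_le hβ h2
    have hfeas : ∀ j, l2norm (![q⁻¹ • Aᵀ.mulVec (reluV (-y))] j) ≤ 1 := by
      intro j
      fin_cases j
      show l2norm (q⁻¹ • Aᵀ.mulVec (reluV (-y))) ≤ 1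
      rw [hq]
      exact feas_unit hA (reluV (-y)) (by rw [← hq]; exact hq0)
    refine ⟨hfeas, ?_⟩
    rw [hP]
    exact opt_iff hA y hβ _ _ hfeas (val2 hA y hβ hp hq h1 h2)
  · have hp0 : 0 < p := lt_of_lt_of_le hβ h1
    have hfeas : ∀ j, l2norm (![p⁻¹ • Aᵀ.mulVec (reluV y)] j) ≤ 1 := by
      intro j
      fin_cases j
      show l2norm (p⁻¹ • Aᵀ.mulVec (reluV y)) ≤ 1
      rw [hp]
      exact feas_unit hA (reluV y) (by rw [← hp]; exact hp0)
    refine ⟨hfeas, ?_⟩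
    rw [hP]
    exact opt_iff hA y hβ _ _ hfeas (val3 hA y hβ hp hq h1 h2)
  · rw [hP]
    exact opt_iff hA y hβ _ _ (fun j => j.elim0) (val4 A y hβ hp hq h1 h2)
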